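/- Let η : T → ℝ≥0 be an error indicator on a finite set T of elements with total η²(T) := ∑_{T∈T} η²(T) > 0, and let 0 < θ ≤ 1. Then there exists a subset M ⊆ T of minimal cardinality satisfying the Dörfler criterion θ η²(T) ≤ ∑_{T∈M} η²(T), and any set M consisting of the ⌈θ|T|⌉ elements with largest indicator values satisfies the criterion. -/
import Mathlib


open Finset

/-- Dörfler marking: for a positive total error `∑_{T∈𝒯} η(T)²` and bulk
parameter `0 < θ ≤ 1`, there is a subset `M ⊆ 𝒯` of minimal cardinality
satisfying `θ ∑_{T∈𝒯} η(T)² ≤ ∑_{T∈M} η(T)²`; moreover, any subset of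
cardinality `⌈θ |𝒯|⌉` consisting of elements with the largest indicator values
satisfies the criterion. -/
theorem doerfler_marking {α : Type*} [DecidableEq α]
    (𝒯 : Finset α) (η : α → ℝ) (hη : ∀ a, 0 ≤ η a)
    (hpos : 0 < ∑ T ∈ 𝒯, η T ^ 2)
    (θ : ℝ) (hθ0 : 0 < θ) (hθ1 : θ ≤ 1) :
    (∃ M ⊆ 𝒯, θ * ∑ T ∈ 𝒯, η T ^ 2 ≤ ∑ T ∈ M, η T ^ 2 ∧
      ∀ M' ⊆ 𝒯, θ * ∑ T ∈ 𝒯, η T ^ 2 ≤ ∑ T ∈ M', η T ^ 2 →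
        M.card ≤ M'.card) ∧
    (∀ M ⊆ 𝒯, M.card = ⌈θ * 𝒯.card⌉₊ →
      (∀ a ∈ M, ∀ b ∈ 𝒯 \ M, η b ≤ η a) →
      θ * ∑ T ∈ 𝒯, η T ^ 2 ≤ ∑ T ∈ M, η T ^ 2) := by
  classical
  constructor
  · have hT : θ * ∑ T ∈ 𝒯, η T ^ 2 ≤ ∑ T ∈ 𝒯, η T ^ 2 := by nlinarith
    obtain ⟨M, hM, hmin⟩ := Finset.exists_min_image
      (𝒯.powerset.filter fun M => θ * ∑ T ∈ 𝒯, η T ^ 2 ≤ ∑ T ∈ M, η T ^ 2)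
      Finset.card ⟨𝒯, by simp [hT]⟩
    simp only [mem_filter, mem_powerset] at hM
    exact ⟨M, hM.1, hM.2, fun M' hM' h =>
      hmin M' (by simp only [mem_filter, mem_powerset]; exact ⟨hM', h⟩)⟩
  · intro M hMT hcard hle
    have hn : 0 < 𝒯.card := by
      rcases Finset.eq_empty_or_nonempty 𝒯 with h | h
      · simp [h] at hpos
      · exact card_pos.2 h
    have hm : 0 < M.card := by
      rw [hcard]
      exact Nat.ceil_pos.2 (by positivity)
    have hS1 : (0:ℝ) ≤ ∑ T ∈ M, η T ^ 2 :=
      Finset.sum_nonneg fun i _ => sq_nonneg _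
    have hS2 : (0:ℝ) ≤ ∑ T ∈ 𝒯 \ M, η T ^ 2 :=
      Finset.sum_nonneg fun i _ => sq_nonneg _
    have hsplit : ∑ T ∈ 𝒯, η T ^ 2
        = ∑ T ∈ 𝒯 \ M, η T ^ 2 + ∑ T ∈ M, η T ^ 2 :=
      (Finset.sum_sdiff hMT).symm
    have hmn : (𝒯 \ M).card + M.card = 𝒯.card :=
      Finset.card_sdiff_add_card_eq_card hMT
    have hθn : θ * 𝒯.card ≤ (M.card : ℝ) := by
      rw [hcard]; exact Nat.le_ceil _
    have hkey : (M.card : ℝ) * ∑ T ∈ 𝒯 \ M, η T ^ 2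
        ≤ ((𝒯 \ M).card : ℝ) * ∑ T ∈ M, η T ^ 2 := by
      calc (M.card : ℝ) * ∑ T ∈ 𝒯 \ M, η T ^ 2
          = ∑ _a ∈ M, ∑ b ∈ 𝒯 \ M, η b ^ 2 := by
            rw [Finset.sum_const, nsmul_eq_mul]
        _ ≤ ∑ a ∈ M, ∑ _b ∈ 𝒯 \ M, η a ^ 2 := by
            refine Finset.sum_le_sum fun a ha => Finset.sum_le_sum fun b hb => ?_
            exact pow_le_pow_left₀ (hη b) (hle a ha b hb) 2
        _ = ((𝒯 \ M).card : ℝ) * ∑ a ∈ M, η a ^ 2 := by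
            simp [Finset.sum_const, nsmul_eq_mul, Finset.mul_sum]
    have hmn' : ((𝒯 \ M).card : ℝ) + M.card = 𝒯.card := by
      exact_mod_cast congrArg (Nat.cast (R := ℝ)) hmn
    have hmpos : (0:ℝ) < M.card := by exact_mod_cast hm
    rw [hsplit]
    have h1 : θ * ((M.card : ℝ) * ∑ T ∈ 𝒯 \ M, η T ^ 2)
        ≤ θ * (((𝒯 \ M).card : ℝ) * ∑ T ∈ M, η T ^ 2) :=
      mul_le_mul_of_nonneg_left hkey hθ0.le
    have h2 : θ * (𝒯.card : ℝ) * ∑ T ∈ M, η T ^ 2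
        ≤ (M.card : ℝ) * ∑ T ∈ M, η T ^ 2 :=
      mul_le_mul_of_nonneg_right hθn hS1
    nlinarith [h1, h2, hmpos, hS1, hS2]
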